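/- arXiv:1604.02215 — 3 statements merged into one kernel-verified Lean document; each statement's English description precedes it below -/
import Mathlib

section
/- Let ε > 0, let 0 < δ ≤ ε, let d ∈ ℝ, let R ⊆ U_ε(d) with d ∈ R, let m ≥ 1, and let x, y ∈ A_m(ε, d, R). Set a = x − m·d and b = y − m·d, and suppose a < 0 < b and δ ≤ gcd(a, b). Then there exists N ∈ ℕ such that for all n ≥ N: the set A_n(ε, d, R) is κ-dense in U_ε(n·d) for every κ > gcd(a, b), and moreover n·d + k·gcd(a, b) ∈ A_n(ε, d, R) for every integer k such that n·d + k·gcd(a, b) ∈ U_ε(n·d). -/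
/-!
Since every element of `R` lies within `ε` of `d`, the partial-sum constraint in the definition of
`A_n(ε, d, R)` is automatic: ordering the deviations `d - xᵢ` greedily, always taking next one whose
sign is opposite to the current partial sum, keeps every partial sum in `(-ε, ε)`. Hence
`A_n(ε, d, R) = n • R ∩ U_ε(n d)`. Writing `a = p g` and `b = q g` with `p < 0 < q` coprime, every
integer `k` is `s p + t q` with `s, t ≥ 0`, and then `s x + t y + (n - m (s + t)) d = n d + k g` is
a sum of `n` elements of `R`. Only finitely many `k` have `n d + k g ∈ U_ε(n d)`, so for large `n`
all these points lie in `A_n(ε, d, R)`; they are spaced `g` apart, whence `κ`-density for `κ > g`.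
-/

/-- `U_ε(x)`: the open `ε`-neighborhood `(x - ε, x + ε)`. -/
def USet (ε x : ℝ) : Set ℝ := Set.Ioo (x - ε) (x + ε)

/-- `A(ε, (dᵢ), (Rᵢ))`: the set of `z ∈ U_ε(d₁ + ⋯ + dₙ)` which can be written as
`z = x₁ + ⋯ + xₙ` with `xᵢ ∈ Rᵢ` and `|Σ_{i ≤ r} (dᵢ - xᵢ)| < ε` for all `r ≤ n`. -/
def ASeq (ε : ℝ) (n : ℕ) (d : ℕ → ℝ) (R : ℕ → Set ℝ) : Set ℝ :=
  { z | z ∈ USet ε (∑ i ∈ Finset.range n, d i) ∧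
    ∃ x : ℕ → ℝ, (∀ i < n, x i ∈ R i) ∧ z = ∑ i ∈ Finset.range n, x i ∧
      ∀ r ≤ n, |∑ i ∈ Finset.range r, (d i - x i)| < ε }

/-- `A_n(ε, d, R)`: the set `A(ε, (dᵢ), (Rᵢ))` for constant sequences `dᵢ = d`, `Rᵢ = R`. -/
def ASet (ε d : ℝ) (R : Set ℝ) (n : ℕ) : Set ℝ := ASeq ε n (fun _ => d) (fun _ => R)

/-- `A` is `ε`-dense in `I`: every open subinterval of `I` of length `ε` meets `A`. -/
def EpsDenseIn (A : Set ℝ) (ε : ℝ) (I : Set ℝ) : Prop :=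
  ∀ x : ℝ, Set.Ioo x (x + ε) ⊆ I → (Set.Ioo x (x + ε) ∩ A).Nonempty

/-- `g = gcd(a, b)` for reals: either `g > 0` is the greatest common divisor of `a` and `b`
(the largest `c > 0` such that `a` and `b` are integer multiples of `c`), or `g = 0` and no
positive common divisor exists. -/
def IsRealGcd (a b g : ℝ) : Prop :=
  (0 < g ∧ (∃ k : ℤ, a = k * g) ∧ (∃ k : ℤ, b = k * g) ∧
    ∀ c : ℝ, 0 < c → (∃ k : ℤ, a = k * c) → (∃ k : ℤ, b = k * c) → c ≤ g) ∨
  (g = 0 ∧ ∀ c : ℝ, 0 < c → (∃ k : ℤ, a = k * c) → (∃ k : ℤ, b = k * c) → False)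

open Finset
open scoped Pointwise

lemma mem_USet_iff {ε c z : ℝ} : z ∈ USet ε c ↔ |z - c| < ε := by
  rw [USet, ← Real.ball_eq_Ioo, Metric.mem_ball, Real.dist_eq]

lemma exists_mem_abs_add_lt {ε S : ℝ} {l : List ℝ} (hl : l ≠ []) (hlε : ∀ v ∈ l, |v| < ε)
    (hS : |S| < ε) (hSl : |S + l.sum| < ε) : ∃ v ∈ l, |S + v| < ε := by
  obtain ⟨a, t, rfl⟩ := List.exists_cons_of_ne_nil hl
  -- otherwise every `S + v` leaves `(-ε, ε)` on the side of `S`, and then so does `S + l.sum`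
  by_contra! h
  rw [List.sum_cons, abs_lt] at hSl
  rw [abs_lt] at hS
  rcases le_total S 0 with hS0 | hS0
  · have hneg : ∀ v ∈ a :: t, S + v ≤ -ε := fun v hv =>
      (le_abs'.mp (h v hv)).resolve_right fun hle => by linarith [(abs_lt.mp (hlε v hv)).2]
    have ht : t.sum ≤ 0 := by
      simpa using t.sum_le_card_nsmul 0 fun v hv => by
        linarith [hneg v (List.mem_cons_of_mem a hv)]
    linarith [hneg a List.mem_cons_self]
  · have hpos : ∀ v ∈ a :: t, ε ≤ S + v := fun v hv =>
      (le_abs'.mp (h v hv)).resolve_left fun hle => by linarith [(abs_lt.mp (hlε v hv)).1]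
    have ht : 0 ≤ t.sum := by
      simpa using t.card_nsmul_le_sum 0 fun v hv => by
        linarith [hpos v (List.mem_cons_of_mem a hv)]
    linarith [hpos a List.mem_cons_self]

theorem exists_perm_abs_add_sum_take_lt {ε S : ℝ} {l : List ℝ} (hlε : ∀ v ∈ l, |v| < ε)
    (hS : |S| < ε) (hSl : |S + l.sum| < ε) :
    ∃ l' : List ℝ, l.Perm l' ∧ ∀ r, |S + (l'.take r).sum| < ε := by
  rcases eq_or_ne l [] with rfl | hl
  · exact ⟨[], .nil, fun r => by simpa using hS⟩
  obtain ⟨v, hv, hSv⟩ := exists_mem_abs_add_lt hl hlε hS hSl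
  have hperm := List.perm_cons_erase hv
  have hlen : (l.erase v).length < l.length := by
    rw [List.length_erase_of_mem hv]
    exact Nat.sub_lt (List.length_pos_of_ne_nil hl) one_pos
  obtain ⟨l', hl', hprefix⟩ := exists_perm_abs_add_sum_take_lt (S := S + v) (l := l.erase v)
    (fun w hw => hlε w (List.mem_of_mem_erase hw)) hSv
    (by rwa [add_assoc, ← List.sum_cons, ← hperm.sum_eq])
  refine ⟨v :: l', hperm.trans (hl'.cons v), fun r => ?_⟩
  cases r with
  | zero => simpa using hS
  | succ r => simpa [add_assoc] using hprefix r
termination_by l.length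

lemma sum_range_getD_eq_sum_take {M : Type*} [AddCommMonoid M] (l : List M) (r : ℕ) :
    ∑ i ∈ range r, l.getD i 0 = (l.take r).sum := by
  induction r with
  | zero => simp
  | succ r ih =>
    rw [sum_range_succ, ih, List.take_add_one, List.sum_append, List.getD_eq_getElem?_getD]
    cases l[r]? <;> simp

lemma sum_range_mem_nsmul {M : Type*} [AddCommMonoid M] {R : Set M} {x : ℕ → M} {n : ℕ}
    (hx : ∀ i < n, x i ∈ R) : ∑ i ∈ range n, x i ∈ n • R := by
  simpa using Set.finsetSum_mem_finsetSum (range n) (fun _ => R) x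
    fun i hi => hx i (mem_range.mp hi)

lemma ASet_subset_nsmul (ε d : ℝ) (R : Set ℝ) (n : ℕ) : ASet ε d R n ⊆ n • R := by
  rintro z ⟨-, x, hxR, rfl, -⟩
  exact sum_range_mem_nsmul hxR

lemma nsmul_inter_USet_subset_ASet {ε d : ℝ} {R : Set ℝ} (hR : R ⊆ USet ε d) (n : ℕ) :
    n • R ∩ USet ε (n * d) ⊆ ASet ε d R n := by
  rintro z ⟨hzR, hzU⟩
  obtain ⟨f, rfl⟩ := Set.mem_nsmul.mp hzR
  set z := (List.ofFn fun i => (f i : ℝ)).sum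
  set D := List.ofFn fun i => d - (f i : ℝ) with hD
  have hDR : ∀ v ∈ D, d - v ∈ R := by
    simp only [hD, List.mem_ofFn]
    rintro _ ⟨i, rfl⟩
    simp
  have hDε : ∀ v ∈ D, |v| < ε := fun v hv => by
    simpa [abs_sub_comm, mem_USet_iff] using hR (hDR v hv)
  have hDsum : D.sum = n * d - z := by
    simp [hD, z, List.sum_ofFn, Finset.sum_sub_distrib]
  have hε : 0 < ε := (abs_nonneg _).trans_lt (mem_USet_iff.mp hzU)
  obtain ⟨D', hD', hprefix⟩ := exists_perm_abs_add_sum_take_lt (S := 0) hDε (by simpa using hε)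
    (by rw [zero_add, hDsum, abs_sub_comm]; exact mem_USet_iff.mp hzU)
  have hdev : ∀ r, ∑ i ∈ range r, (d - (d - D'.getD i 0)) = (D'.take r).sum := fun r => by
    simp only [sub_sub_cancel, sum_range_getD_eq_sum_take]
  refine ⟨by simpa using hzU, fun i => d - D'.getD i 0, fun i hi => ?_, ?_,
    fun r _ => by simpa only [hdev, zero_add] using hprefix r⟩
  · have hi' : i < D'.length := by simpa [← hD'.length_eq, hD] using hi
    show d - D'.getD i 0 ∈ R
    rw [List.getD_eq_getElem _ _ hi']
    exact hDR _ (hD'.symm.subset (List.getElem_mem hi'))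
  · have := hdev n
    rw [sum_sub_distrib, sum_const, card_range, nsmul_eq_mul, List.take_of_length_le
      (by simp [← hD'.length_eq, hD]), ← hD'.sum_eq, hDsum] at this
    linarith

theorem ASet_eq_nsmul_inter_USet {ε d : ℝ} {R : Set ℝ} (hR : R ⊆ USet ε d) (n : ℕ) :
    ASet ε d R n = n • R ∩ USet ε (n * d) :=
  (Set.subset_inter (ASet_subset_nsmul ε d R n) fun _ hz => by simpa using hz.1).antisymm
    (nsmul_inter_USet_subset_ASet hR n)

lemma IsRealGcd.exists_isCoprime {a b g : ℝ} (hg : IsRealGcd a b g) (hg0 : 0 < g) (ha : a ≠ 0) :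
    ∃ p q : ℤ, a = p * g ∧ b = q * g ∧ IsCoprime p q := by
  obtain ⟨-, ⟨p, hp⟩, ⟨q, hq⟩, hmax⟩ := hg.resolve_right fun h => hg0.ne' h.1
  refine ⟨p, q, hp, hq, Int.isCoprime_iff_gcd_eq_one.mpr ?_⟩
  have hpos : 0 < Int.gcd p q := Int.gcd_pos_of_ne_zero_left q fun h => ha (by simp [hp, h])
  obtain ⟨p', hp'⟩ := Int.gcd_dvd_left p q
  obtain ⟨q', hq'⟩ := Int.gcd_dvd_right p q
  generalize Int.gcd p q = c at hpos hp' hq' ⊢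
  -- `c * g` is a common divisor of `a` and `b`, hence at most `g`
  have hle := hmax (c * g) (by positivity)
    ⟨p', by rw [hp, hp']; push_cast; ring⟩ ⟨q', by rw [hq, hq']; push_cast; ring⟩
  have : (c : ℝ) ≤ 1 := le_of_mul_le_mul_right (by simpa using hle) hg0
  exact le_antisymm (by exact_mod_cast this) hpos

lemma IsCoprime.exists_nat_mul_add_nat_mul_eq {p q : ℤ} (h : IsCoprime p q) (hp : p < 0)
    (hq : 0 < q) (k : ℤ) : ∃ s t : ℕ, s * p + t * q = k := by
  obtain ⟨u, v, huv⟩ := h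
  -- shift the Bézout solution `(k u, k v)` along `(q, -p)` until both coefficients are nonnegative
  set j : ℤ := |k * u| + |k * v|
  have hj : 0 ≤ j := by positivity
  have hs : 0 ≤ k * u + j * q := by
    linarith [le_mul_of_one_le_right hj hq, neg_abs_le (k * u), abs_nonneg (k * v)]
  have ht : 0 ≤ k * v - j * p := by
    linarith [le_mul_of_one_le_right hj (neg_pos.mpr hp), neg_abs_le (k * v), abs_nonneg (k * u)]
  refine ⟨(k * u + j * q).toNat, (k * v - j * p).toNat, ?_⟩
  rw [Int.toNat_of_nonneg hs, Int.toNat_of_nonneg ht]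
  linear_combination k * huv

lemma abs_le_ceil_div_of_abs_mul_lt {ε g : ℝ} {k : ℤ} (hg : 0 < g) (hk : |k * g| < ε) :
    |k| ≤ ⌈ε / g⌉ := by
  rw [abs_mul, abs_of_pos hg, ← lt_div_iff₀ hg] at hk
  exact_mod_cast hk.le.trans (Int.le_ceil _)

lemma epsDenseIn_of_int_mul_mem {A I : Set ℝ} {c g κ : ℝ} (hg : 0 < g) (hκ : g < κ)
    (hA : ∀ k : ℤ, c + k * g ∈ I → c + k * g ∈ A) : EpsDenseIn A κ I := by
  intro u hI
  set k := ⌊(u - c) / g⌋ + 1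
  have hk : u < c + k * g ∧ c + k * g ≤ u + g := by
    have h1 := Int.lt_floor_add_one ((u - c) / g)
    have h2 := Int.floor_le ((u - c) / g)
    rw [div_lt_iff₀ hg] at h1
    rw [le_div_iff₀ hg] at h2
    push_cast [k]
    constructor <;> nlinarith
  have hmem : c + k * g ∈ Set.Ioo u (u + κ) := ⟨hk.1, by linarith [hk.2]⟩
  exact ⟨_, hmem, hA k (hI hmem)⟩

lemma nsmul_add_nsmul_add_nsmul_mem_nsmul {M : Type*} [AddCommMonoid M] {R : Set M} {x y d : M}
    {m : ℕ} (hx : x ∈ m • R) (hy : y ∈ m • R) (hd : d ∈ R) (s t r : ℕ) :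
    s • x + t • y + r • d ∈ (m * (s + t) + r) • R := by
  rw [add_nsmul, mul_add, add_nsmul, mul_nsmul, mul_nsmul]
  exact Set.add_mem_add (Set.add_mem_add (Set.nsmul_mem_nsmul hx) (Set.nsmul_mem_nsmul hy))
    (Set.nsmul_mem_nsmul hd)

lemma add_int_mul_mem_nsmul {R : Set ℝ} {x y d g : ℝ} {m n s t : ℕ} {p q : ℤ} (hx : x ∈ m • R)
    (hy : y ∈ m • R) (hd : d ∈ R) (hp : x - m * d = p * g) (hq : y - m * d = q * g)
    (hn : m * (s + t) ≤ n) : n * d + (s * p + t * q : ℤ) * g ∈ n • R := by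
  have h := nsmul_add_nsmul_add_nsmul_mem_nsmul hx hy hd s t (n - m * (s + t))
  rw [Nat.add_sub_cancel' hn] at h
  convert h using 1
  simp only [nsmul_eq_mul, Nat.cast_sub hn]
  push_cast
  linear_combination -(s : ℝ) * hp - (t : ℝ) * hq

theorem ASet_generating_large_gcd_general (ε δ d : ℝ) (hδ : 0 < δ)
    (R : Set ℝ) (hR : R ⊆ USet ε d) (hd : d ∈ R) (m : ℕ)
    (x y : ℝ) (hx : x ∈ ASet ε d R m) (hy : y ∈ ASet ε d R m)
    (ha : x - (m : ℝ) * d < 0) (hb : 0 < y - (m : ℝ) * d)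
    (g : ℝ) (hg : IsRealGcd (x - (m : ℝ) * d) (y - (m : ℝ) * d) g) (hgδ : δ ≤ g) :
    ∃ N : ℕ, ∀ n : ℕ, N ≤ n →
      (∀ κ : ℝ, g < κ → EpsDenseIn (ASet ε d R n) κ (USet ε ((n : ℝ) * d))) ∧
      (∀ k : ℤ, (n : ℝ) * d + k * g ∈ USet ε ((n : ℝ) * d) →
        (n : ℝ) * d + k * g ∈ ASet ε d R n) := by
  have hg0 : 0 < g := hδ.trans_le hgδ
  obtain ⟨p, q, hp, hq, hpq⟩ := hg.exists_isCoprime hg0 ha.ne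
  have hp0 : p < 0 := by exact_mod_cast neg_of_mul_neg_left (hp ▸ ha) hg0.le
  have hq0 : 0 < q := by exact_mod_cast pos_of_mul_pos_left (hq ▸ hb) hg0.le
  choose s t hst using hpq.exists_nat_mul_add_nat_mul_eq hp0 hq0
  set K := ⌈ε / g⌉
  refine ⟨m * (Icc (-K) K).sup (fun k => s k + t k), fun n hn => ?_⟩
  have hlattice (k : ℤ) (hk : (n : ℝ) * d + k * g ∈ USet ε (n * d)) :
      (n : ℝ) * d + k * g ∈ ASet ε d R n := by
    have hkK : k ∈ Icc (-K) K := mem_Icc.mpr <| abs_le.mp <|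
      abs_le_ceil_div_of_abs_mul_lt hg0 (by simpa [mem_USet_iff] using hk)
    rw [ASet_eq_nsmul_inter_USet hR] at hx hy ⊢
    refine ⟨hst k ▸ add_int_mul_mem_nsmul hx.1 hy.1 hd hp hq ?_, hk⟩
    exact (Nat.mul_le_mul_left m (le_sup (f := fun k => s k + t k) hkK)).trans hn
  exact ⟨fun κ hκ => epsDenseIn_of_int_mul_mem hg0 hκ hlattice, hlattice⟩

/-- Let `d ∈ R ⊆ U_ε(d)`, `m ≥ 1`, `x, y ∈ A_m(ε, d, R)`, `a = x − m·d`,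
`b = y − m·d` with `a < 0 < b`, and suppose `δ ≤ gcd(a, b)` where `0 < δ ≤ ε`.  Then there is
`N` such that for all `n ≥ N` the set `A_n(ε, d, R)` is `κ`-dense in `U_ε(n·d)` for every
`κ > gcd(a, b)`, and `n·d + k·gcd(a, b) ∈ A_n(ε, d, R)` for every integer `k` with
`n·d + k·gcd(a, b) ∈ U_ε(n·d)`. -/
theorem ASet_generating_large_gcd (ε δ d : ℝ) (hε : 0 < ε) (hδ : 0 < δ) (hδε : δ ≤ ε)
    (R : Set ℝ) (hR : R ⊆ USet ε d) (hd : d ∈ R) (m : ℕ) (hm : 1 ≤ m)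
    (x y : ℝ) (hx : x ∈ ASet ε d R m) (hy : y ∈ ASet ε d R m)
    (ha : x - (m : ℝ) * d < 0) (hb : 0 < y - (m : ℝ) * d)
    (g : ℝ) (hg : IsRealGcd (x - (m : ℝ) * d) (y - (m : ℝ) * d) g) (hgδ : δ ≤ g) :
    ∃ N : ℕ, ∀ n : ℕ, N ≤ n →
      (∀ κ : ℝ, g < κ → EpsDenseIn (ASet ε d R n) κ (USet ε ((n : ℝ) * d))) ∧
      (∀ k : ℤ, (n : ℝ) * d + k * g ∈ USet ε ((n : ℝ) * d) →
        (n : ℝ) * d + k * g ∈ ASet ε d R n) :=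
  ASet_generating_large_gcd_general ε δ d hδ R hR hd m x y hx hy ha hb g hg hgδ
end

section
/- Fix υ > 0 and a strictly monotone sequence (t_m)_{m∈ℕ} of reals converging to 0 with υ + t_0 > 0. For any 0 < ε ≤ 1, any 0 < δ ≤ ε, any D > 0, and any r ∈ ℕ, there exist N ∈ ℕ and M ∈ ℕ such that for any n ≥ N, any reals d_1, …, d_n and any sets R_i ⊆ U_ε(d_i) (1 ≤ i ≤ n) satisfying (a) 2ε < d_i ≤ D for all i, and (b) each R_i is r_i-tamely (ε/12)-dense in U_ε(d_i) for some r_i ≤ r, the set A(ε, (d_i)_{i=1}^n, (R_i)_{i=1}^n) contains a subset that is M-tamely δ-dense in U_{ε/2}(Σ_{i=1}^n d_i). -/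
/-- The additive semigroup generated by a set of reals: all finite sums of its elements. -/
def semigroupGen (S : Set ℝ) : Set ℝ :=
  { x | ∃ l : List ℝ, l ≠ [] ∧ (∀ s ∈ l, s ∈ S) ∧ l.sum = x }

/-- `𝒯_m`: the additive semigroup generated by `{υ + t₀, …, υ + t_m}`. -/
def TGen (υ : ℝ) (t : ℕ → ℝ) (m : ℕ) : Set ℝ :=
  semigroupGen {x : ℝ | ∃ i ≤ m, x = υ + t i}

/-- `𝒯_m^* = υ + 𝒯_m`. -/
def TGenStar (υ : ℝ) (t : ℕ → ℝ) (m : ℕ) : Set ℝ :=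
  (fun x => υ + x) '' TGen υ t m

/-- `R ⊆ U_ε(d)` is `r`-tamely `δ`-dense in `U_ε(d)`: there is a finite
`L ⊆ U_ε(d) ∩ 𝒯_r^*` which is `δ`-dense in `U_ε(d)` and such that
`R = (L + {t_m : m ≥ r}) ∩ U_ε(d)`. -/
def RTamelyDense (υ : ℝ) (t : ℕ → ℝ) (r : ℕ) (δ ε d : ℝ) (R : Set ℝ) : Prop :=
  ∃ L : Set ℝ, L.Finite ∧ L ⊆ USet ε d ∩ TGenStar υ t r ∧
    EpsDenseIn L δ (USet ε d) ∧
    R = {z : ℝ | ∃ l ∈ L, ∃ m ≥ r, z = l + t m} ∩ USet ε d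

/-- `R` is tamely `δ`-dense in `U_ε(d)` if it is `r`-tamely `δ`-dense for some `r`. -/
def TamelyDense (υ : ℝ) (t : ℕ → ℝ) (δ ε d : ℝ) (R : Set ℝ) : Prop :=
  ∃ r : ℕ, RTamelyDense υ t r δ ε d R

/-! Pick indices `p, q ≥ r` with `t p < t q` so close to `0` that `s = t q - t p` is tiny, and
let `K s ≈ ε / 12`. Greedily choose base points `lᵢ` of the tame sets so that the drift
`Σ_{i<j} (dᵢ - (lᵢ + t p))` stays in `[0, ε/12)`. Trading `t p` for `t q` in `k ≤ K` of the first
`n - 1` summands moves the partial sums by at most `K s ≈ ε / 12`, so the drift stays below `ε`,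
while the last summand runs through an `ε/12`-dense set. The resulting points
`Σ_{i<n-1} (lᵢ + t p) + k s + c` form an `s`-fine, hence `δ`-dense, grid in `U_{ε/2}(Σ dᵢ)`
made of elements of `𝒯*_M`, and adding a tail `t m`, `m ≥ M`, keeps them in `A`. -/

open Finset Filter Topology

theorem mem_semigroupGen_of_mem {S : Set ℝ} {x : ℝ} (hx : x ∈ S) : x ∈ semigroupGen S :=
  ⟨[x], List.cons_ne_nil x [], by simpa using hx, List.sum_singleton⟩

theorem add_mem_semigroupGen {S : Set ℝ} {x y : ℝ} (hx : x ∈ semigroupGen S)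
    (hy : y ∈ semigroupGen S) : x + y ∈ semigroupGen S := by
  obtain ⟨l₁, hl₁, hl₁S, rfl⟩ := hx
  obtain ⟨l₂, -, hl₂S, rfl⟩ := hy
  refine ⟨l₁ ++ l₂, by simp [hl₁], fun s hs => ?_, List.sum_append⟩
  rcases List.mem_append.mp hs with h | h
  exacts [hl₁S s h, hl₂S s h]

section TGen

variable {υ : ℝ} {t : ℕ → ℝ} {M : ℕ}

theorem TGen_mono {m m' : ℕ} (h : m ≤ m') : TGen υ t m ⊆ TGen υ t m' := by
  rintro x ⟨l, hne, hS, hsum⟩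
  refine ⟨l, hne, fun s hs => ?_, hsum⟩
  obtain ⟨i, hi, rfl⟩ := hS s hs
  exact ⟨i, hi.trans h, rfl⟩

theorem TGenStar_mono {m m' : ℕ} (h : m ≤ m') : TGenStar υ t m ⊆ TGenStar υ t m' :=
  Set.image_mono (TGen_mono h)

theorem add_mem_TGen_of_mem_TGenStar {y : ℝ} {m : ℕ} (hy : y ∈ TGenStar υ t M) (hm : m ≤ M) :
    y + t m ∈ TGen υ t M := by
  obtain ⟨a, ha, rfl⟩ := hy
  rw [add_right_comm]
  exact add_mem_semigroupGen (mem_semigroupGen_of_mem ⟨m, hm, rfl⟩) ha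

theorem add_mem_TGenStar {c a : ℝ} (hc : c ∈ TGenStar υ t M) (ha : a ∈ TGen υ t M) :
    c + a ∈ TGenStar υ t M := by
  obtain ⟨a', ha', rfl⟩ := hc
  exact ⟨a' + a, add_mem_semigroupGen ha' ha, (add_assoc _ _ _).symm⟩

theorem add_sum_mem_TGenStar {ι : Type*} (s : Finset ι) {c : ℝ} {f : ι → ℝ}
    (hc : c ∈ TGenStar υ t M) (hf : ∀ i ∈ s, f i ∈ TGen υ t M) :
    c + ∑ i ∈ s, f i ∈ TGenStar υ t M := by
  classical
  induction s using Finset.induction_on with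
  | empty => simpa using hc
  | insert i s hi ih =>
    rw [sum_insert hi, add_left_comm, add_comm]
    exact add_mem_TGenStar (ih fun j hj => hf j (mem_insert_of_mem hj)) (hf i (mem_insert_self i s))

def IsTameAnchor (υ : ℝ) (t : ℕ → ℝ) (M r : ℕ) (ε d : ℝ) (R : Set ℝ) (y : ℝ) : Prop :=
  y ∈ TGenStar υ t M ∧ ∀ m ≥ r, y + t m ∈ USet ε d → y + t m ∈ R

theorem RTamelyDense.exists_tameAnchors {r' r : ℕ} {ρ ε d : ℝ} {R : Set ℝ}
    (h : RTamelyDense υ t r' ρ ε d R) (hr' : r' ≤ r) (hr : r ≤ M) :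
    ∃ L : Set ℝ, L.Finite ∧ EpsDenseIn L ρ (USet ε d) ∧
      ∀ y ∈ L, IsTameAnchor υ t M r ε d R y := by
  obtain ⟨L, hfin, hsub, hdense, rfl⟩ := h
  refine ⟨L, hfin, hdense, fun y hy => ⟨TGenStar_mono (hr'.trans hr) (hsub hy).2, ?_⟩⟩
  exact fun m hm hU => ⟨⟨y, hy, m, hr'.trans hm, rfl⟩, hU⟩

end TGen

theorem exists_forall_sum_range_mem {α M : Type*} [Nonempty α] [AddCommMonoid M]
    {P : ℕ → α → Prop} {f : ℕ → α → M} {S : Set M} (h0 : 0 ∈ S) (n : ℕ)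
    (hstep : ∀ i < n, ∀ D ∈ S, ∃ y, P i y ∧ D + f i y ∈ S) :
    ∃ l : ℕ → α, (∀ i < n, P i (l i)) ∧ ∀ j ≤ n, ∑ i ∈ range j, f i (l i) ∈ S := by
  induction n with
  | zero =>
    refine ⟨fun _ => Classical.arbitrary α, fun i hi => absurd hi i.not_lt_zero, fun j hj => ?_⟩
    simpa [Nat.le_zero.mp hj] using h0
  | succ n ih =>
    obtain ⟨l, hl, hsum⟩ := ih fun i hi => hstep i (by omega)
    obtain ⟨y, hy, hyS⟩ := hstep n n.lt_succ_self _ (hsum n le_rfl)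
    have hupdate : ∀ j ≤ n, ∑ i ∈ range j, f i (Function.update l n y i) =
        ∑ i ∈ range j, f i (l i) := fun j hj =>
      sum_congr rfl fun i hi => by
        rw [Function.update_of_ne ((mem_range.mp hi).trans_le hj).ne]
    refine ⟨Function.update l n y, fun i hi => ?_, fun j hj => ?_⟩
    · rcases Nat.lt_succ_iff_lt_or_eq.mp hi with hi | rfl
      · simpa [Function.update_of_ne hi.ne] using hl i hi
      · simpa using hy
    · rcases Nat.le_succ_iff.mp hj with hj | rfl
      · exact hupdate j hj ▸ hsum j hj
      · rwa [sum_range_succ, hupdate n le_rfl, Function.update_self]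

theorem EpsDenseIn.exists_add_mem_Ico {L : Set ℝ} {ρ ε d τ D : ℝ}
    (hL : EpsDenseIn L ρ (USet ε d)) (hτ : |τ| ≤ ε - ρ) (hD : D ∈ Set.Ico 0 ρ) :
    ∃ y ∈ L, D + (d - (y + τ)) ∈ Set.Ico 0 ρ := by
  obtain ⟨hD0, hDρ⟩ := hD
  obtain ⟨hτl, hτu⟩ := abs_le.mp hτ
  obtain ⟨y, ⟨hy₁, hy₂⟩, hy⟩ := hL (d + D - τ - ρ) (Set.Ioo_subset_Ioo (by linarith) (by linarith))
  exact ⟨y, hy, by linarith, by linarith⟩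

theorem EpsDenseIn.exists_natCast_mul_add_mem_Ioc {L I : Set ℝ} {ρ s v : ℝ} {K : ℕ}
    (hL : EpsDenseIn L ρ I) (hs : 0 < s) (hK : ρ ≤ K * s)
    (hv : Set.Ioo (v - K * s) (v - K * s + ρ) ⊆ I) :
    ∃ k ≤ K, ∃ c ∈ L, (k : ℝ) * s + c ∈ Set.Ioc (v - s) v := by
  obtain ⟨c, ⟨hc₁, hc₂⟩, hc⟩ := hL _ hv
  have hu : 0 ≤ (v - c) / s := div_nonneg (by linarith) hs.le
  have hk₁ : (⌊(v - c) / s⌋₊ : ℝ) * s ≤ v - c := (le_div_iff₀ hs).mp (Nat.floor_le hu)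
  have hk₂ : v - c < (⌊(v - c) / s⌋₊ + 1 : ℝ) * s := (div_lt_iff₀ hs).mp (Nat.lt_floor_add_one _)
  refine ⟨⌊(v - c) / s⌋₊, ?_, c, hc, by linarith, by linarith⟩
  have : (⌊(v - c) / s⌋₊ : ℝ) < K := lt_of_mul_lt_mul_right (hk₁.trans_lt (by linarith)) hs.le
  exact_mod_cast this.le

theorem sum_range_add_ite_lt (y : ℕ → ℝ) (s : ℝ) {k b : ℕ} (hk : k ≤ b) :
    ∑ i ∈ range b, (y i + if i < k then s else 0) = ∑ i ∈ range b, y i + k * s := by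
  rw [sum_add_distrib, ← sum_range_add_sum_Ico (fun i => if i < k then s else 0) hk,
    sum_congr rfl fun i hi => if_pos (mem_range.mp hi),
    sum_eq_zero fun i hi => if_neg (mem_Ico.mp hi).1.not_gt]
  simp

theorem sum_range_ite_lt_le {s : ℝ} (hs : 0 ≤ s) (j k : ℕ) :
    ∑ i ∈ range j, (if i < k then s else 0) ≤ k * s := by
  rw [← sum_filter, sum_const, nsmul_eq_mul]
  gcongr
  calc ((range j).filter (· < k)).card ≤ (range k).card :=
        card_le_card fun i hi => mem_range.mpr (mem_filter.mp hi).2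
    _ = k := card_range k

theorem mem_ASeq_succ {ε z c : ℝ} {b : ℕ} {d x : ℕ → ℝ} {R : ℕ → Set ℝ}
    (hz : z ∈ USet ε (∑ i ∈ range (b + 1), d i)) (hx : ∀ i < b, x i ∈ R i) (hc : c ∈ R b)
    (hzx : z = ∑ i ∈ range b, x i + c)
    (hpartial : ∀ j ≤ b, |∑ i ∈ range j, (d i - x i)| < ε) :
    z ∈ ASeq ε (b + 1) d R := by
  have hx' : ∀ j ≤ b, ∀ g : ℕ → ℝ → ℝ,
      ∑ i ∈ range j, g i (Function.update x b c i) = ∑ i ∈ range j, g i (x i) :=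
    fun j hj g => sum_congr rfl fun i hi => by
      rw [Function.update_of_ne ((mem_range.mp hi).trans_le hj).ne]
  have hsum : z = ∑ i ∈ range (b + 1), Function.update x b c i := by
    rw [sum_range_succ, hx' b le_rfl fun _ y => y, Function.update_self, hzx]
  refine ⟨hz, Function.update x b c, fun i hi => ?_, hsum, fun j hj => ?_⟩
  · rcases Nat.lt_succ_iff_lt_or_eq.mp hi with hi | rfl
    · simpa [Function.update_of_ne hi.ne] using hx i hi
    · simpa using hc
  · rcases Nat.le_succ_iff.mp hj with hj | rfl
    · rw [hx' j hj fun i y => d i - y]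
      exact hpartial j hj
    · rw [sum_sub_distrib, ← hsum, abs_sub_comm]
      exact abs_sub_lt_iff.mpr ⟨by linarith [hz.2], by linarith [hz.1]⟩

theorem mem_ASeq_succ_of_swaps {ε ρ s c z : ℝ} {b k : ℕ} {d y : ℕ → ℝ} {R : ℕ → Set ℝ}
    (hy : ∀ i < b, y i ∈ R i ∧ y i + s ∈ R i) (hc : c ∈ R b)
    (hdrift : ∀ j ≤ b, ∑ i ∈ range j, (d i - y i) ∈ Set.Ico 0 ρ) (hρ : ρ ≤ ε) (hs : 0 ≤ s)
    (hk : k ≤ b) (hks : k * s < ε) (hz : z ∈ USet ε (∑ i ∈ range (b + 1), d i))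
    (hzc : z = ∑ i ∈ range b, y i + k * s + c) :
    z ∈ ASeq ε (b + 1) d R := by
  set g : ℕ → ℝ := fun i => if i < k then s else 0
  refine mem_ASeq_succ (x := fun i => y i + g i) hz (fun i hi => ?_) hc
    (by rw [sum_range_add_ite_lt y s hk, hzc]) fun j hj => ?_
  · by_cases hik : i < k
    · simpa [g, hik] using (hy i hi).2
    · simpa [g, hik] using (hy i hi).1
  · have hsplit : ∑ i ∈ range j, (d i - (y i + g i)) =
        ∑ i ∈ range j, (d i - y i) - ∑ i ∈ range j, g i := by
      rw [← sum_sub_distrib]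
      exact sum_congr rfl fun i _ => by ring
    have hg₀ : 0 ≤ ∑ i ∈ range j, g i := sum_nonneg fun i _ => by
      simp only [g]; split_ifs <;> linarith
    have hg := sum_range_ite_lt_le hs j k
    have hD := hdrift j hj
    rw [hsplit, abs_lt]
    constructor <;> linarith [hD.1, hD.2]

theorem epsDenseIn_grid {L : Set ℝ} {ρ ε δ s a e d : ℝ} {K : ℕ}
    (hL : EpsDenseIn L ρ (USet ε d)) (hs : 0 < s) (hsδ : 2 * s ≤ δ) (hρs : ρ + s ≤ ε / 2)
    (hK : ρ ≤ K * s) (hK' : K * s < ρ + s) (he : e ∈ Set.Ico 0 ρ) :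
    EpsDenseIn ({y | ∃ k ≤ K, ∃ c ∈ L, y = a + k * s + c} ∩ USet (ε / 2) (a + e + d)) δ
      (USet (ε / 2) (a + e + d)) := by
  intro x hx
  obtain ⟨hx₁, hx₂⟩ := (Set.Ioo_subset_Ioo_iff (by linarith : x < x + δ)).mp hx
  obtain ⟨k, hk, c, hc, hkc₁, hkc₂⟩ := hL.exists_natCast_mul_add_mem_Ioc (v := x + δ / 2 - a) hs hK
    (Set.Ioo_subset_Ioo (by linarith [he.1]) (by linarith [he.2]))
  have hmem : a + k * s + c ∈ Set.Ioo x (x + δ) := ⟨by linarith, by linarith⟩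
  exact ⟨_, hmem, ⟨k, hk, c, hc, rfl⟩, hx hmem⟩

theorem exists_pair_lt_of_tendsto_zero {t : ℕ → ℝ} (hmono : StrictMono t ∨ StrictAnti t)
    (hlim : Tendsto t atTop (𝓝 0)) {η : ℝ} (hη : 0 < η) (r : ℕ) :
    ∃ p q, r ≤ p ∧ r ≤ q ∧ t p < t q ∧ |t p| < η ∧ |t q| < η := by
  obtain ⟨m, hm⟩ := eventually_atTop.mp
    ((hlim.eventually (Metric.ball_mem_nhds 0 hη)).and (eventually_ge_atTop r))
  have hsmall : ∀ i ≥ m, |t i| < η := fun i hi => by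
    simpa [Real.norm_eq_abs] using (hm i hi).1
  have hr : r ≤ m := (hm m le_rfl).2
  rcases hmono with h | h
  · exact ⟨m, m + 1, hr, by omega, h m.lt_succ_self, hsmall m le_rfl, hsmall _ m.le_succ⟩
  · exact ⟨m + 1, m, by omega, hr, h m.lt_succ_self, hsmall _ m.le_succ, hsmall m le_rfl⟩

theorem exists_nat_le_mul_lt_add {ρ s : ℝ} (hρ : 0 ≤ ρ) (hs : 0 < s) :
    ∃ K : ℕ, ρ ≤ K * s ∧ K * s < ρ + s :=
  ⟨⌈ρ / s⌉₊, (div_le_iff₀ hs).mp (Nat.le_ceil _), by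
    have := (mul_lt_mul_iff_left₀ hs).mpr (Nat.ceil_lt_add_one (div_nonneg hρ hs.le))
    rwa [add_mul, one_mul, div_mul_cancel₀ _ hs.ne'] at this⟩

theorem exists_tame_subset_ASeq {υ ε δ ρ s : ℝ} {t d l : ℕ → ℝ} {R : ℕ → Set ℝ} {L : Set ℝ}
    {p q M r K b : ℕ} (hs : 0 < s) (hqs : t q = t p + s) (hrp : r ≤ p) (hrq : r ≤ q)
    (hpM : p ≤ M) (hqM : q ≤ M) (hsδ : 2 * s ≤ δ) (hρs : ρ + s ≤ ε / 2)
    (hK : ρ ≤ K * s) (hK' : K * s < ρ + s) (hKb : K ≤ b)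
    (hl : ∀ i < b, IsTameAnchor υ t M r ε (d i) (R i) (l i))
    (hdrift : ∀ j ≤ b, ∑ i ∈ range j, (d i - (l i + t p)) ∈ Set.Ico 0 ρ)
    (hLfin : L.Finite) (hLdense : EpsDenseIn L ρ (USet ε (d b)))
    (hL : ∀ c ∈ L, IsTameAnchor υ t M r ε (d b) (R b) c) :
    ∃ R' ⊆ ASeq ε (b + 1) d R, RTamelyDense υ t M δ (ε / 2) (∑ i ∈ range (b + 1), d i) R' := by
  set a := ∑ i ∈ range b, (l i + t p)
  set e := ∑ i ∈ range b, (d i - (l i + t p))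
  have he : e ∈ Set.Ico 0 ρ := hdrift b le_rfl
  have hT : ∑ i ∈ range (b + 1), d i = a + e + d b := by
    rw [sum_range_succ, ← sum_add_distrib]
    simp only [add_sub_cancel]
  have hterm : ∀ i < b, l i + t p ∈ USet ε (d i) ∧ l i + t q ∈ USet ε (d i) := fun i hi => by
    obtain ⟨h₁l, h₁u⟩ := hdrift i hi.le
    obtain ⟨h₂l, h₂u⟩ := hdrift (i + 1) hi
    rw [sum_range_succ] at h₂l h₂u
    rw [hqs]
    exact ⟨⟨by linarith, by linarith⟩, ⟨by linarith, by linarith⟩⟩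
  rw [hT]
  refine ⟨{z | ∃ y ∈ {y | ∃ k ≤ K, ∃ c ∈ L, y = a + k * s + c} ∩ USet (ε / 2) (a + e + d b),
    ∃ m ≥ M, z = y + t m} ∩ USet (ε / 2) (a + e + d b), ?_, _, ?_, ?_,
    epsDenseIn_grid hLdense hs hsδ hρs hK hK' he, rfl⟩
  · rintro z ⟨⟨_, ⟨⟨k, hk, c, hc, rfl⟩, -⟩, m, hm, rfl⟩, hz⟩
    have hks : (k : ℝ) * s ≤ K * s := by gcongr
    obtain ⟨he₀, heρ⟩ := he
    refine mem_ASeq_succ_of_swaps (y := fun i => l i + t p) (c := c + t m)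
      (fun i hi => ⟨(hl i hi).2 p hrp (hterm i hi).1, ?_⟩)
      ((hL c hc).2 m (hrp.trans (hpM.trans hm)) ⟨?_, ?_⟩) hdrift (by linarith) hs.le
      (hk.trans hKb) (by linarith) (hT ▸ ⟨by linarith [hz.1], by linarith [hz.2]⟩) (by ring)
    · simpa [hqs, add_assoc] using (hl i hi).2 q hrq (hterm i hi).2
    · linarith [hz.1]
    · linarith [hz.2, mul_nonneg k.cast_nonneg hs.le]
  · refine (((Set.finite_Iic K).prod hLfin).image fun kc => a + kc.1 * s + kc.2).subset ?_
      |>.inter_of_left _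
    rintro _ ⟨k, hk, c, hc, rfl⟩
    exact ⟨(k, c), ⟨hk, hc⟩, rfl⟩
  · rintro _ ⟨⟨k, hk, c, hc, rfl⟩, hU⟩
    refine ⟨hU, ?_⟩
    have hswap : a + k * s + c = c + ∑ i ∈ range b, (l i + t (if i < k then q else p)) := by
      rw [add_comm, ← sum_range_add_ite_lt _ _ (hk.trans hKb)]
      congr 1
      exact sum_congr rfl fun i _ => by split_ifs <;> simp [hqs, add_assoc]
    rw [hswap]
    exact add_sum_mem_TGenStar _ (hL c hc).1 fun i hi =>
      add_mem_TGen_of_mem_TGenStar (hl i (mem_range.mp hi)).1 (by split_ifs <;> assumption)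

theorem delta_density_general_general (υ : ℝ) (t : ℕ → ℝ)
    (hmono : StrictMono t ∨ StrictAnti t)
    (hlim : Filter.Tendsto t Filter.atTop (nhds 0))
    (ε δ D : ℝ) (hε : 0 < ε) (hδ : 0 < δ)
    (r : ℕ) :
    ∃ N M : ℕ, ∀ n : ℕ, N ≤ n → ∀ (d : ℕ → ℝ) (R : ℕ → Set ℝ),
      (∀ i < n, 2 * ε < d i ∧ d i ≤ D) →
      (∀ i < n, R i ⊆ USet ε (d i)) →
      (∀ i < n, ∃ ri ≤ r, RTamelyDense υ t ri (ε / 12) ε (d i) (R i)) →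
      ∃ R' : Set ℝ, R' ⊆ ASeq ε n d R ∧
        RTamelyDense υ t M δ (ε / 2) (∑ i ∈ Finset.range n, d i) R' := by
  set η := min (δ / 4) (ε / 8)
  have hηδ : η ≤ δ / 4 := min_le_left _ _
  have hηε : η ≤ ε / 8 := min_le_right _ _
  obtain ⟨p, q, hrp, hrq, hpq, htp, htq⟩ :=
    exists_pair_lt_of_tendsto_zero hmono hlim (by positivity : 0 < η) r
  rw [abs_lt] at htp htq
  obtain ⟨K, hK, hK'⟩ := exists_nat_le_mul_lt_add (by positivity : 0 ≤ ε / 12) (sub_pos.mpr hpq)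
  refine ⟨K + 1, max p q, fun n hn d R _ _ htame => ?_⟩
  obtain ⟨b, rfl⟩ : ∃ b, n = b + 1 := ⟨n - 1, by omega⟩
  have hanchors : ∀ i < b + 1, ∃ L : Set ℝ, L.Finite ∧ EpsDenseIn L (ε / 12) (USet ε (d i)) ∧
      ∀ y ∈ L, IsTameAnchor υ t (max p q) r ε (d i) (R i) y := fun i hi => by
    obtain ⟨ri, hri, h⟩ := htame i hi
    exact h.exists_tameAnchors hri (hrp.trans (le_max_left p q))
  obtain ⟨l, hl, hdrift⟩ := exists_forall_sum_range_mem
    (P := fun i y => IsTameAnchor υ t (max p q) r ε (d i) (R i) y)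
    (f := fun i y => d i - (y + t p)) (S := Set.Ico 0 (ε / 12)) ⟨le_rfl, by positivity⟩ b
    fun i hi e he => by
      obtain ⟨L, -, hLdense, hLanchor⟩ := hanchors i (by omega)
      obtain ⟨y, hy, hyD⟩ :=
        hLdense.exists_add_mem_Ico (τ := t p) (abs_le.mpr ⟨by linarith, by linarith⟩) he
      exact ⟨y, hLanchor y hy, hyD⟩
  obtain ⟨L, hLfin, hLdense, hLanchor⟩ := hanchors b (by omega)
  exact exists_tame_subset_ASeq (sub_pos.mpr hpq) (by ring) hrp hrq (le_max_left p q)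
    (le_max_right p q) (by linarith) (by linarith) hK hK' (by omega) hl hdrift hLfin hLdense hLanchor

/-- Fix `υ > 0` and a strictly monotone sequence `t_m → 0` with `υ + t₀ > 0`.
For any `0 < ε ≤ 1`, `0 < δ ≤ ε`, `D > 0` and `r ∈ ℕ` there are `N, M ∈ ℕ` such that for any
`n ≥ N`, any reals `d₁, …, dₙ` with `2ε < dᵢ ≤ D`, and any `Rᵢ ⊆ U_ε(dᵢ)` which are
`rᵢ`-tamely `ε/12`-dense in `U_ε(dᵢ)` for some `rᵢ ≤ r`, the set `A(ε, (dᵢ), (Rᵢ))` contains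
a subset which is `M`-tamely `δ`-dense in `U_{ε/2}(Σ dᵢ)`. -/
theorem delta_density_general (υ : ℝ) (hυ : 0 < υ) (t : ℕ → ℝ)
    (hmono : StrictMono t ∨ StrictAnti t)
    (hlim : Filter.Tendsto t Filter.atTop (nhds 0)) (ht0 : 0 < υ + t 0)
    (ε δ D : ℝ) (hε : 0 < ε) (hε1 : ε ≤ 1) (hδ : 0 < δ) (hδε : δ ≤ ε)
    (hD : 0 < D) (r : ℕ) :
    ∃ N M : ℕ, ∀ n : ℕ, N ≤ n → ∀ (d : ℕ → ℝ) (R : ℕ → Set ℝ),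
      (∀ i < n, 2 * ε < d i ∧ d i ≤ D) →
      (∀ i < n, R i ⊆ USet ε (d i)) →
      (∀ i < n, ∃ ri ≤ r, RTamelyDense υ t ri (ε / 12) ε (d i) (R i)) →
      ∃ R' : Set ℝ, R' ⊆ ASeq ε n d R ∧
        RTamelyDense υ t M δ (ε / 2) (∑ i ∈ Finset.range n, d i) R' :=
  delta_density_general_general υ t hmono hlim ε δ D hε hδ r
end

section
/- Let F be a free Borel flow on a standard Borel space X, and let S ⊆ ℝ^{>0} be a nonempty set bounded away from zero such that the subgroup ⟨S⟩ of (ℝ, +) generated by S equals λℤ for some λ > 0. Then F admits an S-regular cross section if and only if F admits a {λ}-regular cross section. -/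
/-- A Borel flow: a Borel measurable action of `(ℝ, +)` on `X`. -/
structure BorelFlow (X : Type*) [MeasurableSpace X] where
  act : X → ℝ → X
  measurable : Measurable (Function.uncurry act)
  act_zero : ∀ x, act x 0 = x
  act_add : ∀ x r s, act (act x r) s = act x (r + s)

namespace BorelFlow

variable {X : Type*} [MeasurableSpace X] (F : BorelFlow X)

/-- The flow is free if `x + r = x` implies `r = 0`. -/
def Free : Prop := ∀ x r, F.act x r = x → r = 0

/-- A cross section for the flow restricted to an invariant set `A`: a Borel subset
of `A` meeting every orbit in `A`, lacunary, and bi-infinite on every orbit. -/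
def IsCrossSectionOn (A C : Set X) : Prop :=
  MeasurableSet C ∧ C ⊆ A ∧
  (∀ x ∈ A, ∃ r : ℝ, F.act x r ∈ C) ∧
  (∃ c > 0, ∀ x ∈ C, ∀ r > 0, F.act x r ∈ C → c ≤ r) ∧
  (∀ x ∈ C, ¬ BddAbove {r : ℝ | F.act x r ∈ C} ∧ ¬ BddBelow {r : ℝ | F.act x r ∈ C})

/-- A cross section for the flow on the whole space. -/
def IsCrossSection (C : Set X) : Prop := F.IsCrossSectionOn Set.univ C

/-- The gap of `x ∈ C`: the least `r > 0` with `x + r ∈ C`. -/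
noncomputable def gap (C : Set X) (x : X) : ℝ :=
  sInf {r : ℝ | 0 < r ∧ F.act x r ∈ C}

/-- The induced automorphism `φ_C` sending a point of `C` to the next one. -/
noncomputable def nextPoint (C : Set X) (x : X) : X := F.act x (F.gap C x)

/-- The gap to the previous point of the cross section. -/
noncomputable def prevGap (C : Set X) (x : X) : ℝ :=
  sInf {r : ℝ | 0 < r ∧ F.act x (-r) ∈ C}

/-- The inverse of the induced automorphism: the previous point of the cross section. -/
noncomputable def prevPoint (C : Set X) (x : X) : X := F.act x (-(F.prevGap C x))

/-- `C` is an `S`-regular cross section on `A`: all gaps belong to `S`. -/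
def SRegularOn (A C : Set X) (S : Set ℝ) : Prop :=
  F.IsCrossSectionOn A C ∧ ∀ x ∈ C, F.gap C x ∈ S

/-- `C` is an `S`-regular cross section: all gaps belong to `S`. -/
def SRegular (C : Set X) (S : Set ℝ) : Prop := F.SRegularOn Set.univ C S

/-- A cross section on `A` with gaps unbounded in both directions along every orbit. -/
def SparseSectionOn (A C : Set X) : Prop :=
  F.IsCrossSectionOn A C ∧ ∀ x ∈ C, ∀ K > 0,
    (∃ n : ℕ, 0 < n ∧ K < F.gap C ((F.nextPoint C)^[n] x)) ∧
    (∃ m : ℕ, 0 < m ∧ K < F.gap C ((F.prevPoint C)^[m] x))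

/-- The flow restricted to `A` is sparse. -/
def SparseOn (A : Set X) : Prop := ∃ C, F.SparseSectionOn A C

/-- The flow is sparse. -/
def Sparse : Prop := F.SparseOn Set.univ

/-- A flow-invariant set. -/
def Invariant (A : Set X) : Prop := ∀ x ∈ A, ∀ r : ℝ, F.act x r ∈ A

end BorelFlow

/-! Since `⟨S⟩ = λℤ`, all gaps of an `S`-regular cross section are multiples of `λ`, hence so
are all its return times, and saturating it under translation by `λℤ` gives a cross section
whose gaps all equal `λ`.

Conversely, a `{λ}`-regular cross section `C` is `λℤ`-invariant, so on each orbit it is a copy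
of `ℤ`. Write `S = Tλ` with `T ⊆ ℕ`; then `gcd T = 1`, so every `d ≥ B` is a sum of elements of
`T`. Greedily exhausting a countable separating family of Borel sets gives a Borel set of
markers in `C` in which consecutive markers are more than `B` steps of `λ` apart yet every
point of `C` is within `B` steps of a marker. Cutting each stretch of `d > B` steps between
consecutive markers according to a composition of `d` into parts from `T` yields an
`S`-regular cross section. -/

open Set

theorem le_of_mem_zmultiples_of_pos {lam r : ℝ} (hlam : 0 < lam)
    (hr : r ∈ AddSubgroup.zmultiples lam) (hr0 : 0 < r) : lam ≤ r := by
  obtain ⟨k, rfl⟩ := AddSubgroup.mem_zmultiples_iff.1 hr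
  rw [zsmul_eq_mul] at hr0 ⊢
  have hk : (0 : ℤ) < k := by exact_mod_cast pos_of_mul_pos_left hr0 hlam.le
  have : (1 : ℝ) ≤ k := by exact_mod_cast hk
  nlinarith

theorem measurable_sInf_setOf_nat {X : Type*} [MeasurableSpace X] {p : X → ℕ → Prop}
    (hp : ∀ n, MeasurableSet {x | p x n}) : Measurable fun x => sInf {n | p x n} := by
  refine measurable_to_countable' fun d => ?_
  have : (fun x => sInf {n | p x n}) ⁻¹' {d} =
      {x | p x d ∧ ∀ m < d, ¬ p x m} ∪ {x | d = 0 ∧ ∀ m, ¬ p x m} := by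
    ext x
    simp only [mem_preimage, mem_singleton_iff, mem_union, mem_ofPred_eq]
    constructor
    · rintro rfl
      rcases {n | p x n}.eq_empty_or_nonempty with h | h
      · exact Or.inr ⟨by rw [h, Nat.sInf_empty], fun m hm => h.subset hm⟩
      · exact Or.inl ⟨Nat.sInf_mem h, fun m hm => Nat.notMem_of_lt_sInf hm⟩
    · rintro (⟨hd, hmin⟩ | ⟨rfl, hnone⟩)
      · exact le_antisymm (Nat.sInf_le hd)
          (le_csInf ⟨d, hd⟩ fun m hm => not_lt.1 fun h => hmin m h hm)
      · have : {n | p x n} = ∅ := eq_empty_iff_forall_notMem.2 hnone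
        rw [this, Nat.sInf_empty]
  have hp' : ∀ n, Measurable (p · n) := fun n => measurableSet_setOfPred.1 (hp n)
  rw [this]
  exact ((hp' d).and (Measurable.forall fun m => measurable_const.imp (hp' m).not)).setOf.union
    (measurable_const.and (Measurable.forall fun m => (hp' m).not)).setOf

open Topology in
theorem exists_measurableSet_seq_separating_finset {X : Type*} [MeasurableSpace X]
    [MeasurableSpace.CountablySeparated X] :
    ∃ U : ℕ → Set X, (∀ i, MeasurableSet (U i)) ∧
      ∀ (x : X) (G : Finset X), x ∉ G → ∃ i, x ∈ U i ∧ ∀ y ∈ G, y ∉ U i := by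
  obtain ⟨g, hg, hginj⟩ := MeasurableSpace.measurable_injection_nat_bool_of_countablySeparated X
  obtain ⟨e, he⟩ := MeasureTheory.exists_measurableEmbedding_real (ℕ → Bool)
  have hf : Measurable (e ∘ g) := he.measurable.comp hg
  have hfinj : Function.Injective (e ∘ g) := he.injective.comp hginj
  let I (i : ℕ) : Set ℝ :=
    Ioo ((Denumerable.ofNat (ℚ × ℚ) i).1 : ℝ) (Denumerable.ofNat (ℚ × ℚ) i).2
  refine ⟨fun i => e ∘ g ⁻¹' I i, fun i => hf measurableSet_Ioo, fun x G hx => ?_⟩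
  have hnhds : ((e ∘ g) '' G)ᶜ ∈ 𝓝 ((e ∘ g) x) :=
    (G.finite_toSet.image _).isClosed.isOpen_compl.mem_nhds
      fun ⟨y, hy, hyx⟩ => hx (hfinj hyx ▸ hy)
  obtain ⟨ε, hε, hball⟩ := Metric.mem_nhds_iff.1 hnhds
  obtain ⟨q₁, hq₁, hq₁'⟩ := exists_rat_btwn (sub_lt_self ((e ∘ g) x) hε)
  obtain ⟨q₂, hq₂, hq₂'⟩ := exists_rat_btwn (lt_add_of_pos_right ((e ∘ g) x) hε)
  obtain ⟨i, hi⟩ : ∃ i, Denumerable.ofNat (ℚ × ℚ) i = (q₁, q₂) :=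
    ⟨_, Denumerable.ofNat_encode _⟩
  have hI : I i = Ioo (q₁ : ℝ) q₂ := by simp only [I, hi]
  refine ⟨i, by simp only [mem_preimage, hI]; exact ⟨hq₁', hq₂⟩, fun y hy hyI => ?_⟩
  rw [mem_preimage, hI] at hyI
  refine hball ?_ ⟨y, hy, rfl⟩
  rw [Real.ball_eq_Ioo]
  exact Ioo_subset_Ioo hq₁.le hq₂'.le hyI

theorem setGcd_eq_one_of_closure_eq_zmultiples {S : Set ℝ} {lam : ℝ} (hlam : 0 < lam)
    (hpos : S ⊆ Ioi 0) (hgen : AddSubgroup.closure S = AddSubgroup.zmultiples lam) :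
    Nat.setGcd {n : ℕ | (n : ℝ) * lam ∈ S} = 1 := by
  set g := Nat.setGcd {n : ℕ | (n : ℝ) * lam ∈ S}
  have hle : AddSubgroup.closure S ≤ AddSubgroup.zmultiples ((g : ℝ) * lam) := by
    refine (AddSubgroup.closure_le _).2 fun s hs => ?_
    obtain ⟨k, rfl⟩ := AddSubgroup.mem_zmultiples_iff.1 (hgen ▸ AddSubgroup.subset_closure hs)
    rw [zsmul_eq_mul] at hs ⊢
    obtain ⟨n, rfl⟩ := Int.eq_ofNat_of_zero_le
      (by exact_mod_cast (pos_of_mul_pos_left (hpos hs) hlam.le).le : (0 : ℤ) ≤ k)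
    obtain ⟨q, hq⟩ :=
      Nat.setGcd_dvd_of_mem (show n ∈ {n : ℕ | (n : ℝ) * lam ∈ S} by simpa using hs)
    exact AddSubgroup.mem_zmultiples_iff.2 ⟨q, by rw [zsmul_eq_mul, hq]; push_cast; ring⟩
  obtain ⟨j, hj⟩ := AddSubgroup.mem_zmultiples_iff.1
    (hle (hgen ▸ AddSubgroup.mem_zmultiples lam))
  rw [zsmul_eq_mul, ← mul_assoc] at hj
  have : j * (g : ℤ) = 1 := by
    exact_mod_cast mul_right_cancel₀ hlam.ne' (hj.trans (one_mul lam).symm)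
  exact Nat.dvd_one.1 (Int.natCast_dvd_natCast.1 (Dvd.intro_left j this))

theorem exists_compositions_of_setGcd_eq_one {T : Set ℕ} (hT : Nat.setGcd T = 1) (h0 : 0 ∉ T) :
    ∃ B : ℕ, ∃ w : (d : ℕ) → Composition d, ∀ d, B ≤ d → ∀ t ∈ (w d).blocks, t ∈ T := by
  obtain ⟨B, hB⟩ := Nat.exists_mem_closure_of_ge T
  have : ∀ d, ∃ c : Composition d, B ≤ d → ∀ t ∈ c.blocks, t ∈ T := by
    intro d
    by_cases hd : B ≤ d
    · obtain ⟨l, hlT, hl⟩ := AddSubmonoid.exists_list_of_mem_closure (hB d hd (hT ▸ one_dvd d))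
      exact ⟨⟨l, fun ht => Nat.pos_of_ne_zero fun h => h0 (h ▸ hlT _ ht), hl⟩, fun _ => hlT⟩
    · exact ⟨Composition.ones d, fun h => absurd h hd⟩
  choose w hw using this
  exact ⟨B, w, hw⟩

namespace BorelFlow

variable {X : Type*} [MeasurableSpace X]

section Basic

variable (F : BorelFlow X)

theorem act_act_neg (x : X) (r : ℝ) : F.act (F.act x r) (-r) = x := by
  rw [F.act_add, add_neg_cancel, F.act_zero]

theorem act_neg_act (x : X) (r : ℝ) : F.act (F.act x (-r)) r = x := by
  simpa using F.act_act_neg x (-r)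

theorem measurable_act_left (t : ℝ) : Measurable fun x => F.act x t :=
  F.measurable.comp (measurable_id.prodMk measurable_const)

def actEquiv (t : ℝ) : X ≃ᵐ X where
  toFun x := F.act x t
  invFun x := F.act x (-t)
  left_inv x := F.act_act_neg x t
  right_inv x := F.act_neg_act x t
  measurable_toFun := F.measurable_act_left t
  measurable_invFun := F.measurable_act_left (-t)

theorem measurableSet_image_act {A : Set X} (hA : MeasurableSet A) (t : ℝ) :
    MeasurableSet ((fun x => F.act x t) '' A) :=
  (F.actEquiv t).measurableSet_image.2 hA

theorem act_left_injective (t : ℝ) : Function.Injective fun x => F.act x t :=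
  (F.actEquiv t).injective

def ReturnTimesIn (A : Set X) (G : AddSubgroup ℝ) : Prop :=
  ∀ x ∈ A, ∀ r, F.act x r ∈ A → r ∈ G

def saturation (lam : ℝ) (C : Set X) : Set X :=
  ⋃ k : ℤ, (fun x => F.act x (k * lam)) '' C

end Basic

variable {F : BorelFlow X}

theorem ReturnTimesIn.mono {A B : Set X} {G : AddSubgroup ℝ} (h : F.ReturnTimesIn A G)
    (hBA : B ⊆ A) : F.ReturnTimesIn B G :=
  fun x hx r hr => h x (hBA hx) r (hBA hr)

theorem isLeast_gap {C : Set X} {c : ℝ} (hc : 0 < c)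
    (hlac : ∀ x ∈ C, ∀ r > 0, F.act x r ∈ C → c ≤ r) {x : X} {r : ℝ} (hr : 0 < r)
    (hxr : F.act x r ∈ C) : IsLeast {r | 0 < r ∧ F.act x r ∈ C} (F.gap C x) := by
  set R := {r | 0 < r ∧ F.act x r ∈ C}
  have hbdd : BddBelow R := ⟨0, fun r hr => hr.1.le⟩
  have hne : R.Nonempty := ⟨r, hr, hxr⟩
  refine ⟨?_, fun s hs => csInf_le hbdd hs⟩
  -- an element of `R` within `c` of the infimum must be the infimum, by lacunarity
  obtain ⟨r₁, hr₁, hr₁lt⟩ := exists_lt_of_csInf_lt hne (lt_add_of_pos_right (sInf R) hc)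
  suffices r₁ = sInf R by rw [gap, ← this]; exact hr₁
  by_contra hne₁
  obtain ⟨r₂, hr₂, hr₂lt⟩ :=
    exists_lt_of_csInf_lt hne ((csInf_le hbdd hr₁).lt_of_ne (Ne.symm hne₁))
  have := hlac _ hr₂.2 (r₁ - r₂) (sub_pos.2 hr₂lt) (by rw [F.act_add, add_sub_cancel]; exact hr₁.2)
  linarith [csInf_le hbdd hr₂]

theorem returnTimesIn_of_gap_mem {C : Set X} {c : ℝ} (hc : 0 < c)
    (hlac : ∀ x ∈ C, ∀ r > 0, F.act x r ∈ C → c ≤ r) {G : AddSubgroup ℝ}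
    (hgap : ∀ x ∈ C, F.gap C x ∈ G) : F.ReturnTimesIn C G := by
  have key : ∀ n : ℕ, ∀ x ∈ C, ∀ r, 0 ≤ r → r ≤ n * c → F.act x r ∈ C → r ∈ G := by
    intro n
    induction n with
    | zero =>
      intro x _ r h0 hr _
      rw [le_antisymm (by simpa using hr) h0]
      exact G.zero_mem
    | succ n ih =>
      intro x hx r h0 hr hxr
      rcases h0.eq_or_lt with rfl | hpos
      · exact G.zero_mem
      have hg := isLeast_gap hc hlac hpos hxr
      have hcg := hlac x hx _ hg.1.1 hg.1.2
      have hrest : r - F.gap C x ∈ G :=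
        ih _ hg.1.2 _ (sub_nonneg.2 (hg.2 ⟨hpos, hxr⟩)) (by push_cast at hr; linarith)
          (by rw [F.act_add, add_sub_cancel]; exact hxr)
      simpa using G.add_mem (hgap x hx) hrest
  intro x hx r hxr
  obtain ⟨n, hn⟩ := exists_nat_ge (|r| / c)
  have hrn : |r| ≤ n * c := (div_le_iff₀ hc).1 hn
  rcases le_or_gt 0 r with h0 | hneg
  · exact key n x hx r h0 (by rwa [abs_of_nonneg h0] at hrn) hxr
  · have := key n _ hxr (-r) (by linarith) (by rwa [abs_of_neg hneg] at hrn)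
      (by rw [F.act_act_neg]; exact hx)
    simpa using G.neg_mem this

theorem isCrossSection_of_returnTimesIn {D : Set X} {lam : ℝ} (hlam : 0 < lam) (K : ℕ)
    (hmeas : MeasurableSet D) (hcover : ∀ x, ∃ r, F.act x r ∈ D)
    (hret : F.ReturnTimesIn D (AddSubgroup.zmultiples lam))
    (hrec : ∀ y ∈ D, ∀ n : ℤ, ∃ k : ℤ, |k| ≤ K ∧ F.act y (((n + k : ℤ) : ℝ) * lam) ∈ D) :
    F.IsCrossSection D := by
  refine ⟨hmeas, subset_univ D, fun x _ => hcover x,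
    ⟨lam, hlam, fun y hy r hr hyr => le_of_mem_zmultiples_of_pos hlam (hret y hy r hyr) hr⟩,
    fun y hy => ⟨not_bddAbove_iff.2 fun b => ?_, not_bddBelow_iff.2 fun b => ?_⟩⟩
  · obtain ⟨k, hk, hmem⟩ := hrec y hy (⌈b / lam⌉ + K + 1)
    refine ⟨_, hmem, (div_lt_iff₀ hlam).1 ?_⟩
    have : (⌈b / lam⌉ : ℝ) + 1 ≤ ((⌈b / lam⌉ + K + 1 + k : ℤ) : ℝ) := by
      exact_mod_cast (by linarith [(abs_le.1 hk).1])
    linarith [Int.le_ceil (b / lam)]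
  · obtain ⟨k, hk, hmem⟩ := hrec y hy (⌊b / lam⌋ - K - 1)
    refine ⟨_, hmem, (lt_div_iff₀ hlam).1 ?_⟩
    have : ((⌊b / lam⌋ - K - 1 + k : ℤ) : ℝ) ≤ (⌊b / lam⌋ : ℝ) - 1 := by
      exact_mod_cast (by linarith [(abs_le.1 hk).2])
    linarith [Int.floor_le (b / lam)]

theorem act_mem_saturation {lam : ℝ} {C : Set X} {y : X} (hy : y ∈ F.saturation lam C)
    (n : ℤ) : F.act y (n * lam) ∈ F.saturation lam C := by
  obtain ⟨k, x, hx, rfl⟩ := mem_iUnion.1 hy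
  refine mem_iUnion.2 ⟨k + n, x, hx, ?_⟩
  rw [F.act_add]; push_cast; ring_nf

theorem subset_saturation (lam : ℝ) (C : Set X) : C ⊆ F.saturation lam C :=
  fun x hx => mem_iUnion.2 ⟨0, x, hx, by simp [F.act_zero]⟩

theorem returnTimesIn_saturation {lam : ℝ} {C : Set X}
    (hret : F.ReturnTimesIn C (AddSubgroup.zmultiples lam)) :
    F.ReturnTimesIn (F.saturation lam C) (AddSubgroup.zmultiples lam) := by
  rintro _ hy r hyr
  obtain ⟨a, x, hx, rfl⟩ := mem_iUnion.1 hy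
  obtain ⟨b, x', hx', hx'r⟩ := mem_iUnion.1 hyr
  have hxx' : F.act x (a * lam + r - b * lam) = x' := by
    rw [sub_eq_add_neg, ← F.act_add, ← F.act_add, ← hx'r, F.act_act_neg]
  have := hret x hx _ (hxx' ▸ hx')
  have hab : ((a - b : ℤ) : ℝ) * lam ∈ AddSubgroup.zmultiples lam := ⟨a - b, zsmul_eq_mul _ _⟩
  convert sub_mem this hab using 1
  push_cast; ring

theorem sRegular_saturation {lam : ℝ} (hlam : 0 < lam) {C : Set X} (hC : F.IsCrossSection C)
    (hret : F.ReturnTimesIn C (AddSubgroup.zmultiples lam)) :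
    F.SRegular (F.saturation lam C) {lam} := by
  have hret' := returnTimesIn_saturation hret
  refine ⟨isCrossSection_of_returnTimesIn hlam 0
    (MeasurableSet.iUnion fun k => F.measurableSet_image_act hC.1 _)
    (fun x => (hC.2.2.1 x trivial).imp fun r hr => subset_saturation lam C hr) hret'
    (fun y hy n => ⟨0, by simp, by simpa using act_mem_saturation hy n⟩), fun y hy => ?_⟩
  have hy1 : F.act y lam ∈ F.saturation lam C := by simpa using act_mem_saturation hy 1
  exact mem_singleton_iff.2 (IsLeast.csInf_eq ⟨⟨hlam, hy1⟩,
    fun r hr => le_of_mem_zmultiples_of_pos hlam (hret' y hy r hr.2) hr.1⟩)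

theorem SRegular.returnTimesIn {C : Set X} {lam : ℝ} (hC : F.SRegular C {lam}) :
    F.ReturnTimesIn C (AddSubgroup.zmultiples lam) :=
  let ⟨⟨_, _, _, ⟨_, hc, hlac⟩, _⟩, hgap⟩ := hC
  returnTimesIn_of_gap_mem hc hlac fun x hx => by
    rw [mem_singleton_iff.1 (hgap x hx)]; exact AddSubgroup.mem_zmultiples lam

theorem SRegular.act_int_mul_mem {C : Set X} {lam : ℝ} (hC : F.SRegular C {lam}) {x : X}
    (hx : x ∈ C) (k : ℤ) : F.act x (k * lam) ∈ C := by
  have hret := hC.returnTimesIn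
  obtain ⟨⟨-, -, -, ⟨c, hc, hlac⟩, hbi⟩, hgap⟩ := hC
  have hleast : ∀ y ∈ C, IsLeast {r | 0 < r ∧ F.act y r ∈ C} lam := fun y hy => by
    obtain ⟨r, hr, hr0⟩ := not_bddAbove_iff.1 (hbi y hy).1 0
    simpa [mem_singleton_iff.1 (hgap y hy)] using isLeast_gap hc hlac hr0 hr
  have hlam : 0 < lam := (hleast x hx).1.1
  -- walk up in steps of `lam` from a point of `C` below `x + k * lam`
  obtain ⟨r, hr, hrk⟩ := not_bddBelow_iff.1 (hbi x hx).2 (k * lam)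
  obtain ⟨m, rfl⟩ := AddSubgroup.mem_zmultiples_iff.1 (hret x hx r hr)
  rw [zsmul_eq_mul] at hr hrk
  have hmk : m ≤ k := by exact_mod_cast (lt_of_mul_lt_mul_right hrk hlam.le).le
  clear hrk
  induction k, hmk using Int.leInduction with
  | base => exact hr
  | succ n _ ih =>
    have := (hleast _ ih).1.2
    rwa [F.act_add, ← add_one_mul, ← Int.cast_one, ← Int.cast_add] at this

section Markers

variable (F) in
def markerStage (lam : ℝ) (K : ℕ) (U : ℕ → Set X) : ℕ → Set X
  | 0 => ∅
  | i + 1 => markerStage lam K U i ∪ {x | x ∈ U i ∧ ∀ k : ℤ, k ≠ 0 → |k| ≤ K →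
      F.act x (k * lam) ∉ U i ∧ F.act x (k * lam) ∉ markerStage lam K U i}

variable {lam : ℝ}

theorem measurableSet_markerStage {K : ℕ} {U : ℕ → Set X} (hU : ∀ i, MeasurableSet (U i))
    (i : ℕ) : MeasurableSet (F.markerStage lam K U i) := by
  induction i with
  | zero => exact MeasurableSet.empty
  | succ i ih =>
    have hact : ∀ (A : Set X), MeasurableSet A → ∀ k : ℤ,
        Measurable fun x => F.act x (k * lam) ∈ A :=
      fun A hA k => (measurable_mem.2 hA).comp (F.measurable_act_left _)
    refine ih.union (Measurable.setOf ?_)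
    exact (measurable_mem.2 (hU i)).and (Measurable.forall fun k => measurable_const.imp
      (measurable_const.imp ((hact _ (hU i) k).not.and (hact _ ih k).not)))

theorem markerStage_separated {K : ℕ} (U : ℕ → Set X) (i : ℕ) :
    ∀ x ∈ F.markerStage lam K U i, ∀ k : ℤ, k ≠ 0 → |k| ≤ K →
      F.act x (k * lam) ∉ F.markerStage lam K U i := by
  induction i with
  | zero => simp [markerStage]
  | succ i ih =>
    have hback : ∀ (x : X) (k : ℤ), F.act (F.act x (k * lam)) ((-k : ℤ) * lam) = x := by
      intro x k; rw [Int.cast_neg, neg_mul, F.act_act_neg]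
    rintro x (hx | ⟨hxU, hx⟩) k hk0 hkK (hy | ⟨hyU, hy⟩)
    · exact ih x hx k hk0 hkK hy
    · exact (hy (-k) (neg_ne_zero.2 hk0) (by rwa [abs_neg])).2 (by rwa [hback])
    · exact (hx k hk0 hkK).2 hy
    · exact (hx k hk0 hkK).1 hyU

theorem exists_markers [MeasurableSpace.CountablySeparated X] (hfree : F.Free) (hlam : lam ≠ 0)
    (K : ℕ) : ∃ M : Set X, MeasurableSet M ∧
      (∀ x ∈ M, ∀ k : ℤ, k ≠ 0 → |k| ≤ K → F.act x (k * lam) ∉ M) ∧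
      ∀ x, ∃ k : ℤ, |k| ≤ K ∧ F.act x (k * lam) ∈ M := by
  classical
  obtain ⟨U, hU, hUsep⟩ := exists_measurableSet_seq_separating_finset (X := X)
  refine ⟨⋃ i, F.markerStage lam K U i, MeasurableSet.iUnion (measurableSet_markerStage hU),
    ?_, fun x => ?_⟩
  · intro x hx k hk0 hkK hy
    obtain ⟨i, hi⟩ := mem_iUnion.1 hx
    obtain ⟨j, hj⟩ := mem_iUnion.1 hy
    have hmono : Monotone (F.markerStage lam K U) :=
      monotone_nat_of_le_succ fun n => subset_union_left
    exact markerStage_separated U (max i j) x (hmono (le_max_left i j) hi) k hk0 hkK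
      (hmono (le_max_right i j) hj)
  · -- freeness keeps `x` out of the finitely many translates it must be separated from
    obtain ⟨i, hxU, hGU⟩ := hUsep x
      (((Finset.Icc (-(K : ℤ)) K).erase 0).image fun k : ℤ => F.act x (k * lam)) (by
        simp only [Finset.mem_image, Finset.mem_erase, not_exists, not_and]
        intro k hk hkx
        exact hk.1 (by exact_mod_cast (mul_eq_zero.1 (hfree x _ hkx)).resolve_right hlam))
    by_contra! hnone
    refine hnone 0 (by simp) ?_
    rw [Int.cast_zero, zero_mul, F.act_zero]
    refine mem_iUnion.2 ⟨i + 1, Or.inr ⟨hxU, fun k hk0 hkK => ⟨hGU _ ?_, fun hk =>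
      hnone k hkK (mem_iUnion.2 ⟨i, hk⟩)⟩⟩⟩
    exact Finset.mem_image_of_mem _ (Finset.mem_erase.2 ⟨hk0, Finset.mem_Icc.2 (abs_le.1 hkK)⟩)

end Markers

section Tiling

-- The number of `lam`-steps from `x` to the next point of `M` (`0` if there is none).
variable (F) in
noncomputable def nextMarker (lam : ℝ) (M : Set X) (x : X) : ℕ :=
  sInf {d : ℕ | 0 < d ∧ F.act x (d * lam) ∈ M}

-- The stretch of `d` steps from a point `x ∈ M` to the next one is cut at the partial sums of
-- the composition `w d`.
variable (F) in
def tiling (lam : ℝ) (M : Set X) (w : (d : ℕ) → Composition d) : Set X :=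
  {y | ∃ x ∈ M, ∃ m < (w (F.nextMarker lam M x)).length,
    F.act x ((w (F.nextMarker lam M x)).sizeUpTo m * lam) = y}

variable {lam : ℝ} {M : Set X}

theorem nextMarker_spec {x : X} (h : ∃ d : ℕ, 0 < d ∧ F.act x (d * lam) ∈ M) :
    0 < F.nextMarker lam M x ∧ F.act x (F.nextMarker lam M x * lam) ∈ M :=
  Nat.sInf_mem h

theorem act_notMem_of_lt_nextMarker {x : X} {e : ℕ} (he0 : 0 < e)
    (he : e < F.nextMarker lam M x) : F.act x (e * lam) ∉ M :=
  fun h => Nat.notMem_of_lt_sInf he ⟨he0, h⟩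

theorem measurable_nextMarker (hM : MeasurableSet M) : Measurable (F.nextMarker lam M) :=
  measurable_sInf_setOf_nat fun _ =>
    (measurable_const.and ((measurable_mem.2 hM).comp (F.measurable_act_left _))).setOf

theorem measurableSet_tiling (hM : MeasurableSet M) (w : (d : ℕ) → Composition d) :
    MeasurableSet (F.tiling lam M w) := by
  have : F.tiling lam M w = ⋃ (d : ℕ) (m : Fin (w d).length),
      (fun x => F.act x ((w d).sizeUpTo m * lam)) '' (M ∩ F.nextMarker lam M ⁻¹' {d}) := by
    ext y
    simp only [tiling, mem_ofPred_eq, mem_iUnion, mem_image, mem_inter_iff, mem_preimage,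
      mem_singleton_iff]
    constructor
    · rintro ⟨x, hx, m, hm, rfl⟩
      exact ⟨_, ⟨m, hm⟩, x, ⟨hx, rfl⟩, rfl⟩
    · rintro ⟨d, m, x, ⟨hx, rfl⟩, rfl⟩
      exact ⟨x, hx, m, m.2, rfl⟩
  rw [this]
  exact MeasurableSet.iUnion fun d => MeasurableSet.iUnion fun m => F.measurableSet_image_act
    (hM.inter (measurable_nextMarker hM (measurableSet_singleton d))) _

theorem subset_tiling (hnext : ∀ x ∈ M, ∃ d : ℕ, 0 < d ∧ F.act x (d * lam) ∈ M)
    (w : (d : ℕ) → Composition d) : M ⊆ F.tiling lam M w := fun x hx =>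
  ⟨x, hx, 0, (w _).length_pos_iff.2 (nextMarker_spec (hnext x hx)).1, by simp [F.act_zero]⟩

theorem eq_of_act_eq_act_of_lt_nextMarker {x x' : X} (hx : x ∈ M) (hx' : x' ∈ M) {s s' : ℕ}
    (hs : s < F.nextMarker lam M x) (hs' : s' < F.nextMarker lam M x')
    (h : F.act x (s * lam) = F.act x' (s' * lam)) : x = x' ∧ s = s' := by
  wlog hle : s' ≤ s generalizing x x' s s'
  · obtain ⟨h₁, h₂⟩ := this hx' hx hs' hs h.symm (le_of_not_ge hle)
    exact ⟨h₁.symm, h₂.symm⟩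
  obtain rfl : s' = s := by
    by_contra hne
    refine act_notMem_of_lt_nextMarker (F := F) (lam := lam) (M := M) (x := x) (e := s - s')
      (by omega) (by omega) ?_
    rwa [Nat.cast_sub hle, sub_mul, sub_eq_add_neg, ← F.act_add, h, F.act_act_neg]
  exact ⟨F.act_left_injective _ h, rfl⟩

theorem blocksFun_le_of_act_mem_tiling {w : (d : ℕ) → Composition d} {x : X} (hx : x ∈ M)
    {m : ℕ} (hm : m < (w (F.nextMarker lam M x)).length) {n : ℕ} (hn : 0 < n)
    (hmem : F.act x ((((w (F.nextMarker lam M x)).sizeUpTo m + n : ℕ) : ℝ) * lam) ∈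
      F.tiling lam M w) :
    (w (F.nextMarker lam M x)).blocksFun ⟨m, hm⟩ ≤ n := by
  suffices (w (F.nextMarker lam M x)).sizeUpTo (m + 1) ≤
      (w (F.nextMarker lam M x)).sizeUpTo m + n by
    have hsucc := (w (F.nextMarker lam M x)).sizeUpTo_succ' ⟨m, hm⟩
    dsimp only at hsucc
    omega
  rcases lt_or_ge ((w _).sizeUpTo m + n) (F.nextMarker lam M x) with hlt | hge
  · -- the point lies in the block of `x`, so it is one of the partition points after `m`
    obtain ⟨x', hx', m', hm', hxm'⟩ := hmem
    obtain ⟨rfl, hs⟩ := eq_of_act_eq_act_of_lt_nextMarker hx hx' hlt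
      (((w _).sizeUpTo_strict_mono hm').trans_le ((w _).sizeUpTo_le _)) hxm'.symm
    have hmono := (w (F.nextMarker lam M x)).monotone_sizeUpTo
    rw [hs]
    exact hmono (hmono.reflect_lt (by omega))
  · exact ((w _).sizeUpTo_le _).trans hge

theorem gap_tiling {w : (d : ℕ) → Composition d} (hlam : 0 < lam)
    (hnext : ∀ x ∈ M, ∃ d : ℕ, 0 < d ∧ F.act x (d * lam) ∈ M)
    (hret : F.ReturnTimesIn (F.tiling lam M w) (AddSubgroup.zmultiples lam)) {y : X}
    (hy : y ∈ F.tiling lam M w) :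
    ∃ x ∈ M, ∃ t ∈ (w (F.nextMarker lam M x)).blocks, F.gap (F.tiling lam M w) y = t * lam := by
  obtain ⟨x, hx, m, hm, rfl⟩ := hy
  set c := w (F.nextMarker lam M x)
  have hsucc : (c.sizeUpTo (m + 1) : ℝ) = c.sizeUpTo m + c.blocksFun ⟨m, hm⟩ := by
    exact_mod_cast c.sizeUpTo_succ' ⟨m, hm⟩
  have hnextpt : F.act x (c.sizeUpTo (m + 1) * lam) ∈ F.tiling lam M w := by
    rcases (Nat.succ_le_of_lt hm).lt_or_eq with h | h
    · exact ⟨x, hx, m + 1, h, rfl⟩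
    · rw [show m + 1 = c.length from h, c.sizeUpTo_length]
      exact subset_tiling hnext w (nextMarker_spec (hnext x hx)).2
  refine ⟨x, hx, _, c.blocksFun_mem_blocks ⟨m, hm⟩, IsLeast.csInf_eq ⟨⟨?_, ?_⟩, ?_⟩⟩
  · exact mul_pos (by exact_mod_cast c.one_le_blocksFun ⟨m, hm⟩) hlam
  · rwa [F.act_add, ← add_mul, ← hsucc]
  · rintro r ⟨hr, hmem⟩
    obtain ⟨k, rfl⟩ := AddSubgroup.mem_zmultiples_iff.1 (hret _ ⟨x, hx, m, hm, rfl⟩ r hmem)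
    rw [zsmul_eq_mul] at hr hmem ⊢
    obtain ⟨n, rfl⟩ := Int.eq_ofNat_of_zero_le
      (by exact_mod_cast (pos_of_mul_pos_left hr hlam.le).le : (0 : ℤ) ≤ k)
    have hn : 0 < n := by exact_mod_cast pos_of_mul_pos_left hr hlam.le
    rw [F.act_add, ← add_mul, Int.cast_natCast, ← Nat.cast_add] at hmem
    rw [Int.cast_natCast]
    gcongr
    exact_mod_cast blocksFun_le_of_act_mem_tiling hx hm hn hmem

end Tiling

theorem exists_markers_of_invariant [MeasurableSpace.CountablySeparated X] (hfree : F.Free)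
    {lam : ℝ} (hlam : lam ≠ 0) (K : ℕ) {C : Set X} (hC : MeasurableSet C)
    (hCinv : ∀ x ∈ C, ∀ k : ℤ, F.act x (k * lam) ∈ C) :
    ∃ M ⊆ C, MeasurableSet M ∧ (∀ x ∈ C, ∃ k : ℤ, |k| ≤ K ∧ F.act x (k * lam) ∈ M) ∧
      (∀ x ∈ M, ∃ d : ℕ, 0 < d ∧ F.act x (d * lam) ∈ M) ∧ ∀ x ∈ M, K < F.nextMarker lam M x := by
  obtain ⟨M₀, hM₀, hsep, hsyn⟩ := F.exists_markers hfree hlam K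
  have hsynC : ∀ x ∈ C, ∃ k : ℤ, |k| ≤ K ∧ F.act x (k * lam) ∈ C ∩ M₀ := fun x hx =>
    (hsyn x).imp fun k hk => ⟨hk.1, hCinv x hx k, hk.2⟩
  have hnext : ∀ x ∈ C ∩ M₀, ∃ d : ℕ, 0 < d ∧ F.act x (d * lam) ∈ C ∩ M₀ := by
    intro x hx
    obtain ⟨k, hk, hkM⟩ := hsynC _ (hCinv x hx.1 (K + 1))
    have hkK := (abs_le.1 hk).1
    obtain ⟨d, hd⟩ := Int.eq_ofNat_of_zero_le (by omega : 0 ≤ (K + 1 + k : ℤ))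
    refine ⟨d, by omega, ?_⟩
    rwa [F.act_add, ← add_mul, ← Int.cast_add, hd, Int.cast_natCast] at hkM
  refine ⟨C ∩ M₀, inter_subset_left, hC.inter hM₀, hsynC, hnext, fun x hx => ?_⟩
  obtain ⟨hd0, hdM⟩ := nextMarker_spec (hnext x hx)
  by_contra! hle
  exact hsep x hx.2 (F.nextMarker lam (C ∩ M₀) x) (by exact_mod_cast hd0.ne')
    (by rw [Nat.abs_cast]; exact_mod_cast hle) (by simpa using hdM.2)

theorem exists_sRegular_of_sRegular_singleton [MeasurableSpace.CountablySeparated X]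
    (hfree : F.Free) {S : Set ℝ} {lam : ℝ} (hlam : 0 < lam) (hpos : S ⊆ Ioi 0)
    (hgen : AddSubgroup.closure S = AddSubgroup.zmultiples lam) {C : Set X}
    (hC : F.SRegular C {lam}) : ∃ D : Set X, F.SRegular D S := by
  obtain ⟨B, w, hw⟩ := exists_compositions_of_setGcd_eq_one
    (setGcd_eq_one_of_closure_eq_zmultiples hlam hpos hgen) fun h => (hpos h).out.ne' (by simp)
  have hCinv : ∀ x ∈ C, ∀ k : ℤ, F.act x (k * lam) ∈ C := fun _ => hC.act_int_mul_mem
  obtain ⟨M, hMC, hM, hsyn, hnext, hB⟩ :=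
    F.exists_markers_of_invariant hfree hlam.ne' B hC.1.1 hCinv
  have hDC : F.tiling lam M w ⊆ C := fun _ ⟨x, hx, m, _, hy⟩ => hy ▸ by
    simpa using hCinv x (hMC hx) ((w _).sizeUpTo m)
  have hret := hC.returnTimesIn.mono hDC
  refine ⟨F.tiling lam M w, isCrossSection_of_returnTimesIn hlam B (measurableSet_tiling hM w)
    (fun x => ?_) hret (fun y hy n => ?_), fun y hy => ?_⟩
  · obtain ⟨r, hr⟩ := hC.1.2.2.1 x trivial
    obtain ⟨k, -, hk⟩ := hsyn _ hr
    exact ⟨r + k * lam, by rw [← F.act_add]; exact subset_tiling hnext w hk⟩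
  · obtain ⟨k, hk, hkM⟩ := hsyn _ (hCinv _ (hDC hy) n)
    refine ⟨k, hk, ?_⟩
    rw [Int.cast_add, add_mul, ← F.act_add]
    exact subset_tiling hnext w hkM
  · obtain ⟨x, hx, t, ht, hgap⟩ := gap_tiling hlam hnext hret hy
    rw [hgap]
    exact hw _ (hB x hx).le t ht

end BorelFlow

theorem S_regular_iff_lambda_regular_general {X : Type*} [MeasurableSpace X] [StandardBorelSpace X]
    (F : BorelFlow X) (hfree : F.Free)
    (S : Set ℝ) (hpos : S ⊆ Set.Ioi (0 : ℝ))
    (lam : ℝ) (hlam : 0 < lam)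
    (hgen : AddSubgroup.closure S = AddSubgroup.zmultiples lam) :
    (∃ C : Set X, F.SRegular C S) ↔ (∃ C : Set X, F.SRegular C {lam}) := by
  constructor
  · rintro ⟨C, hC, hgap⟩
    obtain ⟨c, hc, hlac⟩ := hC.2.2.2.1
    have hret : F.ReturnTimesIn C (AddSubgroup.zmultiples lam) :=
      BorelFlow.returnTimesIn_of_gap_mem hc hlac fun x hx =>
        hgen ▸ AddSubgroup.subset_closure (hgap x hx)
    exact ⟨_, BorelFlow.sRegular_saturation hlam hC hret⟩
  · rintro ⟨C, hC⟩
    exact BorelFlow.exists_sRegular_of_sRegular_singleton hfree hlam hpos hgen hC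

/-- Let `F` be a free Borel flow on a standard Borel space, and let `S` be a
nonempty set of positive reals bounded away from zero whose generated subgroup equals `λℤ`
for some `λ > 0`.  Then `F` admits an `S`-regular cross section if and only if it admits a
`{λ}`-regular cross section. -/
theorem S_regular_iff_lambda_regular {X : Type*} [MeasurableSpace X] [StandardBorelSpace X]
    (F : BorelFlow X) (hfree : F.Free)
    (S : Set ℝ) (hne : S.Nonempty) (hpos : S ⊆ Set.Ioi (0 : ℝ))
    (hbdd : ∃ c > 0, ∀ s ∈ S, c ≤ s)
    (lam : ℝ) (hlam : 0 < lam)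
    (hgen : AddSubgroup.closure S = AddSubgroup.zmultiples lam) :
    (∃ C : Set X, F.SRegular C S) ↔ (∃ C : Set X, F.SRegular C {lam}) :=
  S_regular_iff_lambda_regular_general F hfree S hpos lam hlam hgen
end
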